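/- arXiv:2308.00142 — 9 statements merged into one kernel-verified Lean document; each statement's English description precedes it below -/
import Mathlib

section
/- Let n ≥ k ≥ 1, let L be a symmetric real n×n matrix and B a real n×k matrix, and define F(X) = ⟨X, L X⟩ − ⟨X, B⟩ for real n×k matrices X. Suppose X lies in the Stiefel manifold St(n,k) and satisfies F(X) ≤ F(X Q) for every orthogonal k×k matrix Q (in particular this holds if X is a global minimizer of F over St(n,k), since St(n,k) is invariant under right-multiplication by orthogonal matrices). Then the k×k matrix Xᵀ B is symmetric and positive semidefinite. -/
/-!
The orthogonal invariance `tr (Qᵀ Xᵀ L X Q) = tr (Xᵀ L X)` turns the hypothesis into the statement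
that `Q = 1` maximises `Q ↦ tr (Qᵀ A)` over the orthogonal group, where `A = Xᵀ B`. Testing this
against plane (Givens) rotations forces `A` to be symmetric, and testing it against Householder
reflections `1 - 2 v vᵀ / (vᵀ v)` gives `vᵀ A v ≥ 0`.
-/

open Matrix

lemma eq_zero_of_forall_sq_add_sq_eq_one_mul_add_mul_le {d e : ℝ}
    (h : ∀ c s : ℝ, c ^ 2 + s ^ 2 = 1 → c * d + s * e ≤ d) : e = 0 := by
  by_contra he
  set r := √(d ^ 2 + e ^ 2)
  have hr : 0 < r := Real.sqrt_pos.2 (by positivity)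
  have hr2 : r ^ 2 = d ^ 2 + e ^ 2 := Real.sq_sqrt (by positivity)
  -- test against the unit vector pointing along `(d, e)`
  have hrd : r ≤ d := by
    have hunit : (d / r) ^ 2 + (e / r) ^ 2 = 1 := by field_simp; linarith
    have hval : d / r * d + e / r * e = r := by field_simp; linarith
    linarith [h _ _ hunit]
  have he2 : e ^ 2 ≤ 0 := by nlinarith
  exact he (pow_eq_zero_iff two_ne_zero |>.1 (le_antisymm he2 (sq_nonneg e)))

namespace Matrix

variable {ι R : Type*} [Fintype ι] [DecidableEq ι]

lemma trace_transpose_mul_mul_of_transpose_mul_self [CommRing R] {Q : Matrix ι ι R}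
    (hQ : Qᵀ * Q = 1) (M : Matrix ι ι R) : (Qᵀ * M * Q).trace = M.trace := by
  rw [trace_mul_cycle, mul_eq_one_comm.mp hQ, one_mul]

def householder [Field R] (v : ι → R) : Matrix ι ι R :=
  1 - (2 / (v ⬝ᵥ v)) • vecMulVec v v

section Householder

variable [Field R] (v : ι → R)

lemma householder_transpose : (householder v)ᵀ = householder v := by
  simp [householder, transpose_vecMulVec]

lemma householder_transpose_mul_self {v : ι → R} (hv : v ⬝ᵥ v ≠ 0) :
    (householder v)ᵀ * householder v = 1 := by
  rw [householder_transpose, householder]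
  have h2 : 2 / (v ⬝ᵥ v) * (2 / (v ⬝ᵥ v)) * (v ⬝ᵥ v) = 2 / (v ⬝ᵥ v) + 2 / (v ⬝ᵥ v) := by
    field_simp; ring
  simp only [sub_mul, mul_sub, one_mul, mul_one, smul_mul_smul, vecMulVec_mul_vecMulVec,
    vecMulVec_smul, smul_smul, h2, add_smul]
  abel

lemma trace_householder_mul (A : Matrix ι ι R) :
    (householder v * A).trace = A.trace - 2 / (v ⬝ᵥ v) * (v ⬝ᵥ A *ᵥ v) := by
  rw [householder, sub_mul, one_mul, smul_mul, vecMulVec_mul, trace_sub, trace_smul,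
    trace_vecMulVec, smul_eq_mul, dotProduct_comm v (v ᵥ* A), ← dotProduct_mulVec]

end Householder

def givensRotation [CommRing R] (i j : ι) (c s : R) : Matrix ι ι R :=
  1 + single i i (c - 1) + single j j (c - 1) + single j i s - single i j s

section Givens

variable [CommRing R] {i j : ι} (c s : R)

lemma givensRotation_transpose_mul_self (hij : i ≠ j) (hcs : c ^ 2 + s ^ 2 = 1) :
    (givensRotation i j c s)ᵀ * givensRotation i j c s = 1 := by
  simp only [givensRotation, transpose_add, transpose_sub, transpose_one, transpose_single,
    mul_add, add_mul, mul_sub, sub_mul, one_mul, mul_one, single_mul_single_same,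
    single_mul_single_of_ne, hij, hij.symm, ne_eq, not_false_iff]
  ext a b
  simp only [add_apply, sub_apply, one_apply, zero_apply, single_apply]
  split_ifs <;> simp_all <;> grind

lemma trace_givensRotation_transpose_mul (A : Matrix ι ι R) :
    ((givensRotation i j c s)ᵀ * A).trace
      = A.trace + (c - 1) * (A i i + A j j) + s * (A j i - A i j) := by
  simp only [givensRotation, transpose_add, transpose_sub, transpose_one, transpose_single,
    add_mul, sub_mul, one_mul, trace_add, trace_sub, trace_single_mul, smul_eq_mul]
  ring

end Givens

section TraceMaximal

variable {A : Matrix ι ι ℝ}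

lemma isSymm_of_forall_trace_transpose_mul_le
    (hA : ∀ Q : Matrix ι ι ℝ, Qᵀ * Q = 1 → (Qᵀ * A).trace ≤ A.trace) : A.IsSymm := by
  ext i j
  rcases eq_or_ne i j with rfl | hij
  · rfl
  have h := eq_zero_of_forall_sq_add_sq_eq_one_mul_add_mul_le
    (d := A j j + A i i) (e := A i j - A j i) fun c s hcs => by
      have := hA _ (givensRotation_transpose_mul_self c s hij.symm hcs)
      rw [trace_givensRotation_transpose_mul] at this
      linarith
  rw [transpose_apply]
  linarith

lemma posSemidef_of_forall_trace_transpose_mul_le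
    (hA : ∀ Q : Matrix ι ι ℝ, Qᵀ * Q = 1 → (Qᵀ * A).trace ≤ A.trace) : A.PosSemidef := by
  refine .of_dotProduct_mulVec_nonneg
    (isHermitian_iff_isSymm.2 (isSymm_of_forall_trace_transpose_mul_le hA)) fun v => ?_
  rw [star_trivial]
  rcases eq_or_ne v 0 with rfl | hv
  · simp
  have hvv : 0 < v ⬝ᵥ v :=
    (by simpa using dotProduct_star_self_nonneg v : 0 ≤ v ⬝ᵥ v).lt_of_ne' (by simpa using hv)
  have h := hA _ (householder_transpose_mul_self hvv.ne')
  rw [householder_transpose, trace_householder_mul, sub_le_self_iff] at h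
  exact (mul_nonneg_iff_of_pos_left (by positivity)).1 h

end TraceMaximal

end Matrix

theorem stmt_0_general {n k : ℕ}
    (L : Matrix (Fin n) (Fin n) ℝ)
    (B X : Matrix (Fin n) (Fin k) ℝ)
    (hmin : ∀ Q : Matrix (Fin k) (Fin k) ℝ, Qᵀ * Q = 1 →
      (Xᵀ * (L * X)).trace - (Xᵀ * B).trace ≤
        ((X * Q)ᵀ * (L * (X * Q))).trace - ((X * Q)ᵀ * B).trace) :
    (Xᵀ * B).IsSymm ∧ (Xᵀ * B).PosSemidef := by
  have hA (Q : Matrix (Fin k) (Fin k) ℝ) (hQ : Qᵀ * Q = 1) :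
      (Qᵀ * (Xᵀ * B)).trace ≤ (Xᵀ * B).trace := by
    have h := hmin Q hQ
    rwa [transpose_mul, show Qᵀ * Xᵀ * (L * (X * Q)) = Qᵀ * (Xᵀ * (L * X)) * Q by
      simp only [Matrix.mul_assoc], trace_transpose_mul_mul_of_transpose_mul_self hQ,
      Matrix.mul_assoc, sub_le_sub_iff_left] at h
  exact ⟨isSymm_of_forall_trace_transpose_mul_le hA, posSemidef_of_forall_trace_transpose_mul_le hA⟩

/-- If `X ∈ St(n,k)` satisfies `F(X) ≤ F(XQ)` for all orthogonal `Q`, where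
`F(X) = ⟨X, LX⟩ − ⟨X, B⟩`, then `Xᵀ B` is symmetric positive semidefinite. -/
theorem stmt_0 {n k : ℕ} (hk : 1 ≤ k) (hnk : k ≤ n)
    (L : Matrix (Fin n) (Fin n) ℝ) (hL : L.IsSymm)
    (B X : Matrix (Fin n) (Fin k) ℝ)
    (hX : Xᵀ * X = 1)
    (hmin : ∀ Q : Matrix (Fin k) (Fin k) ℝ, Qᵀ * Q = 1 →
      (Xᵀ * (L * X)).trace - (Xᵀ * B).trace ≤
        ((X * Q)ᵀ * (L * (X * Q))).trace - ((X * Q)ᵀ * B).trace) :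
    (Xᵀ * B).IsSymm ∧ (Xᵀ * B).PosSemidef :=
  stmt_0_general L B X hmin
end

section
/- Let X be a real n×k matrix (n ≥ k) admitting a singular value decomposition X = U Σ Vᵀ, where U is a real n×k matrix with Uᵀ U = I_k, V is an orthogonal k×k matrix, and Σ is a diagonal k×k matrix with nonnegative diagonal entries. Then the matrix U Vᵀ lies in the Stiefel manifold St(n,k) and minimizes the distance to X over St(n,k): for every real n×k matrix Z with Zᵀ Z = I_k, ‖U Vᵀ − X‖_F ≤ ‖Z − X‖_F. -/
open Matrix

/-- The Frobenius norm of a real matrix. -/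
noncomputable def frobNorm {a b : Type*} [Fintype a] [Fintype b]
    (M : Matrix a b ℝ) : ℝ :=
  Real.sqrt (Mᵀ * M).trace

lemma diag_entry_le_one {n k : ℕ} (A B : Matrix (Fin n) (Fin k) ℝ)
    (hA : Aᵀ * A = 1) (hB : Bᵀ * B = 1) (i : Fin k) : (Aᵀ * B) i i ≤ 1 := by
  have h2 : (∑ a, A a i * B a i) ^ 2 ≤ (∑ a, (A a i) ^ 2) * (∑ a, (B a i) ^ 2) :=
    Finset.sum_mul_sq_le_sq_mul_sq _ _ _
  have hAi : (∑ a, (A a i) ^ 2) = 1 := by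
    have := congrArg (fun M => M i i) hA
    simpa [Matrix.mul_apply, Matrix.one_apply, sq] using this
  have hBi : (∑ a, (B a i) ^ 2) = 1 := by
    have := congrArg (fun M => M i i) hB
    simpa [Matrix.mul_apply, Matrix.one_apply, sq] using this
  rw [hAi, hBi, mul_one] at h2
  have : (Aᵀ * B) i i = ∑ a, A a i * B a i := by simp [Matrix.mul_apply]
  rw [this]
  nlinarith [h2, sq_nonneg (∑ a, A a i * B a i)]

/-- If `X = U Σ Vᵀ` with `Uᵀ U = I_k` (`U` an `n×k` matrix), `V` orthogonal `k×k`, and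
`Σ` diagonal with nonnegative entries, then `U Vᵀ ∈ St(n,k)` and `U Vᵀ` minimizes the
Frobenius distance to `X` over the Stiefel manifold. -/
theorem stmt_3 {n k : ℕ} (hnk : k ≤ n)
    (X U : Matrix (Fin n) (Fin k) ℝ) (V : Matrix (Fin k) (Fin k) ℝ)
    (σ : Fin k → ℝ) (hσ : ∀ i, 0 ≤ σ i)
    (hU : Uᵀ * U = 1) (hV : Vᵀ * V = 1)
    (hX : X = U * Matrix.diagonal σ * Vᵀ) :
    (U * Vᵀ)ᵀ * (U * Vᵀ) = 1 ∧
    ∀ Z : Matrix (Fin n) (Fin k) ℝ, Zᵀ * Z = 1 →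
      frobNorm (U * Vᵀ - X) ≤ frobNorm (Z - X) := by
  have hVVt : V * Vᵀ = 1 := mul_eq_one_comm.mp hV
  have hW : (U * Vᵀ)ᵀ * (U * Vᵀ) = 1 := by
    rw [Matrix.transpose_mul, Matrix.transpose_transpose, Matrix.mul_assoc,
      ← Matrix.mul_assoc Uᵀ, hU, Matrix.one_mul, hVVt]
  refine ⟨hW, fun Z hZ => ?_⟩
  -- trace(ZᵀX) ≤ ∑ σ i for any Stiefel Z
  have key : ∀ Z : Matrix (Fin n) (Fin k) ℝ, Zᵀ * Z = 1 →
      (Zᵀ * X).trace ≤ ∑ i, σ i := by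
    intro Z hZ
    have hM : (Z * V)ᵀ * (Z * V) = 1 := by
      rw [Matrix.transpose_mul, Matrix.mul_assoc, ← Matrix.mul_assoc Zᵀ, hZ,
        Matrix.one_mul, hV]
    have h1 : Zᵀ * X = Zᵀ * U * Matrix.diagonal σ * Vᵀ := by
      simp [hX, Matrix.mul_assoc]
    have h2 : (Zᵀ * X).trace = ((Z * V)ᵀ * U * Matrix.diagonal σ).trace := by
      rw [h1, Matrix.trace_mul_comm, Matrix.transpose_mul]
      simp [Matrix.mul_assoc]
    rw [h2, Matrix.trace]
    apply Finset.sum_le_sum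
    intro i _
    rw [Matrix.diag_apply, Matrix.mul_diagonal]
    calc ((Z * V)ᵀ * U) i i * σ i ≤ 1 * σ i :=
          mul_le_mul_of_nonneg_right (diag_entry_le_one _ _ hM hU i) (hσ i)
      _ = σ i := one_mul _
  have keyW : ((U * Vᵀ)ᵀ * X).trace = ∑ i, σ i := by
    have : (U * Vᵀ)ᵀ * X = V * Matrix.diagonal σ * Vᵀ := by
      simp only [hX, Matrix.transpose_mul, Matrix.transpose_transpose,
        Matrix.mul_assoc]
      rw [← Matrix.mul_assoc Uᵀ U, hU, Matrix.one_mul]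
    rw [this, Matrix.trace_mul_cycle, hV, Matrix.one_mul, Matrix.trace_diagonal]
  -- expand quadratic
  have expand : ∀ Y : Matrix (Fin n) (Fin k) ℝ, Yᵀ * Y = 1 →
      ((Y - X)ᵀ * (Y - X)).trace = (k : ℝ) + (Xᵀ * X).trace - 2 * (Yᵀ * X).trace := by
    intro Y hY
    have hYX : (Xᵀ * Y).trace = (Yᵀ * X).trace := by
      rw [← Matrix.trace_transpose (Xᵀ * Y), Matrix.transpose_mul,
        Matrix.transpose_transpose]
    rw [Matrix.transpose_sub, Matrix.sub_mul, Matrix.mul_sub, Matrix.mul_sub,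
      Matrix.trace_sub, Matrix.trace_sub, Matrix.trace_sub, hY, hYX,
      Matrix.trace_one]
    simp [Fintype.card_fin]
    ring
  unfold frobNorm
  apply Real.sqrt_le_sqrt
  rw [expand _ hW, expand _ hZ]
  have := key Z hZ
  rw [keyW]
  linarith
end

section
/- (SQP direction for the Lagrangian.) Let L be a symmetric real n×n matrix, X ∈ St(n,k), and set P = I_n − X Xᵀ. Let C be an invertible real k×k matrix, E a real n×k matrix, and Λ a real k×k matrix such that Λ C⁻¹ = U diag(λ₁,…,λ_k) Uᵀ for some orthogonal k×k matrix U with columns u₁,…,u_k and real numbers λ₁,…,λ_k. Suppose O is a real n×k matrix whose j-th column o_j satisfies P o_j = o_j and (P L P − λ_j P) o_j = P E C⁻¹ u_j for each j = 1,…,k. Then the matrix Z = O Uᵀ satisfies Xᵀ Z = 0 and P L P Z − Z Λ C⁻¹ = P E C⁻¹. -/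
open Matrix

/-- (SQP direction for the Lagrangian.) With `P = I − X Xᵀ`, `Λ C⁻¹ = U diag(λ) Uᵀ`
(`U` orthogonal) and `O` whose `j`-th column `o_j` satisfies `P o_j = o_j` and
`(P L P − λ_j P) o_j = P E C⁻¹ u_j`, the matrix `Z = O Uᵀ` satisfies `Xᵀ Z = 0` and
`P L P Z − Z Λ C⁻¹ = P E C⁻¹`. -/
theorem stmt_4 {n k : ℕ}
    (L : Matrix (Fin n) (Fin n) ℝ) (hL : L.IsSymm)
    (X : Matrix (Fin n) (Fin k) ℝ) (hX : Xᵀ * X = 1)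
    (P : Matrix (Fin n) (Fin n) ℝ) (hP : P = 1 - X * Xᵀ)
    (C : Matrix (Fin k) (Fin k) ℝ) (hC : IsUnit C.det)
    (E : Matrix (Fin n) (Fin k) ℝ)
    (Λ U : Matrix (Fin k) (Fin k) ℝ) (hU : Uᵀ * U = 1)
    (lam : Fin k → ℝ)
    (hΛ : Λ * C⁻¹ = U * Matrix.diagonal lam * Uᵀ)
    (O : Matrix (Fin n) (Fin k) ℝ)
    (hO1 : ∀ j : Fin k, P.mulVec (fun i => O i j) = fun i => O i j)
    (hO2 : ∀ j : Fin k, (P * L * P - lam j • P).mulVec (fun i => O i j) =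
      (P * E * C⁻¹).mulVec (fun i => U i j)) :
    Xᵀ * (O * Uᵀ) = 0 ∧
    P * L * P * (O * Uᵀ) - (O * Uᵀ) * (Λ * C⁻¹) = P * E * C⁻¹ := by

  have hPO : P * O = O := by
    ext i j
    have := congrFun (hO1 j) i
    simpa [Matrix.mulVec, Matrix.mul_apply, dotProduct] using this
  have hXP : Xᵀ * P = 0 := by
    rw [hP, Matrix.mul_sub, Matrix.mul_one, ← Matrix.mul_assoc, hX, Matrix.one_mul,
      sub_self]
  have h1 : Xᵀ * (O * Uᵀ) = 0 := by
    rw [← hPO, ← Matrix.mul_assoc, ← Matrix.mul_assoc, hXP, Matrix.zero_mul,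
      Matrix.zero_mul]
  refine ⟨h1, ?_⟩
  have key : P * L * P * O - O * Matrix.diagonal lam = P * E * C⁻¹ * U := by
    ext i j
    have h2 := congrFun (hO2 j) i
    have h1 := congrFun (hO1 j) i
    simp only [Matrix.sub_mulVec, Matrix.smul_mulVec, Pi.sub_apply,
      Pi.smul_apply, smul_eq_mul, h1] at h2
    simp only [Matrix.sub_apply, Matrix.mul_apply, Matrix.mulVec, dotProduct,
      Matrix.diagonal] at h2 ⊢
    simpa [Finset.mul_sum, mul_comm] using h2
  have hUU : U * Uᵀ = 1 := mul_eq_one_comm.mp hU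
  calc P * L * P * (O * Uᵀ) - (O * Uᵀ) * (Λ * C⁻¹)
      = (P * L * P * O - O * Matrix.diagonal lam) * Uᵀ := by
        rw [hΛ, Matrix.sub_mul, Matrix.mul_assoc (P*L*P) O Uᵀ,
          Matrix.mul_assoc O (Matrix.diagonal lam) Uᵀ]
        congr 1
        rw [Matrix.mul_assoc O Uᵀ, Matrix.mul_assoc U (Matrix.diagonal lam) Uᵀ,
          ← Matrix.mul_assoc Uᵀ U, hU, Matrix.one_mul, ← Matrix.mul_assoc]
    _ = P * E * C⁻¹ * U * Uᵀ := by rw [key]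
    _ = P * E * C⁻¹ := by rw [Matrix.mul_assoc, hUU, Matrix.mul_one]
end

section
/- (Solving the projected Laplacian system.) Let L be an invertible real n×n matrix, let v ∈ ℝⁿ be a unit vector, and set P = I_n − v vᵀ. Let v̄ = L⁻¹ v and suppose vᵀ v̄ ≠ 0. Then for every u ∈ ℝⁿ, the vector w = (I_n − (v̄ vᵀ)/(vᵀ v̄)) L⁻¹ u satisfies P w = w and P L P w = P u. (Thus w solves the grounded system P L P x = P u within the range of the projection P.) -/
open Matrix

/-!
`P` kills `v` and fixes every vector orthogonal to `v`. The matrix `I − v̄ vᵀ / (vᵀ v̄)` is the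
oblique projection along `v̄` onto the hyperplane `vᵀ x = 0`, so `w` is orthogonal to `v` and
`P w = w`. Since `L v̄ = v`, applying `L` gives `L w = u − c v` for a scalar `c`, and `P` removes the
multiple of `v`, leaving `P L P w = P u`.
-/

section ProjectedSystem

variable {ι K : Type*} [Fintype ι] [DecidableEq ι] [Field K]

theorem one_sub_vecMulVec_mulVec (a b x : ι → K) :
    (1 - vecMulVec a b) *ᵥ x = x - (b ⬝ᵥ x) • a := by
  rw [sub_mulVec, one_mulVec, vecMulVec_mulVec, op_smul_eq_smul]

theorem one_sub_vecMulVec_self_mulVec_of_dotProduct_eq_zero {v x : ι → K} (hx : v ⬝ᵥ x = 0) :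
    (1 - vecMulVec v v) *ᵥ x = x := by
  rw [one_sub_vecMulVec_mulVec, hx, zero_smul, sub_zero]

theorem one_sub_vecMulVec_self_mulVec_self {v : ι → K} (hv : v ⬝ᵥ v = 1) :
    (1 - vecMulVec v v) *ᵥ v = 0 := by
  rw [one_sub_vecMulVec_mulVec, hv, one_smul, sub_self]

theorem one_sub_smul_vecMulVec_mulVec (c : K) (a b x : ι → K) :
    (1 - c • vecMulVec a b) *ᵥ x = x - (c * (b ⬝ᵥ x)) • a := by
  rw [sub_mulVec, one_mulVec, smul_mulVec, vecMulVec_mulVec, op_smul_eq_smul, smul_smul]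

theorem dotProduct_one_sub_inv_smul_vecMulVec_mulVec {a b : ι → K} (hab : b ⬝ᵥ a ≠ 0)
    (x : ι → K) : b ⬝ᵥ ((1 - (b ⬝ᵥ a)⁻¹ • vecMulVec a b) *ᵥ x) = 0 := by
  rw [one_sub_smul_vecMulVec_mulVec, dotProduct_sub, dotProduct_smul, smul_eq_mul,
    mul_right_comm, inv_mul_cancel₀ hab, one_mul, sub_self]

end ProjectedSystem

/-- (Solving the projected Laplacian system.) For invertible `L`, unit vector `v`,
`P = I − v vᵀ`, `v̄ = L⁻¹ v` with `vᵀ v̄ ≠ 0`, the vector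
`w = (I − v̄ vᵀ / (vᵀ v̄)) L⁻¹ u` satisfies `P w = w` and `P L P w = P u`. -/
theorem stmt_5 {n : ℕ}
    (L : Matrix (Fin n) (Fin n) ℝ) (hL : IsUnit L.det)
    (v : Fin n → ℝ) (hv : v ⬝ᵥ v = 1)
    (P : Matrix (Fin n) (Fin n) ℝ) (hP : P = 1 - Matrix.vecMulVec v v)
    (vbar : Fin n → ℝ) (hvbar : vbar = L⁻¹.mulVec v)
    (hne : v ⬝ᵥ vbar ≠ 0)
    (u : Fin n → ℝ)
    (w : Fin n → ℝ)
    (hw : w = ((1 : Matrix (Fin n) (Fin n) ℝ) -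
      (v ⬝ᵥ vbar)⁻¹ • Matrix.vecMulVec vbar v).mulVec (L⁻¹.mulVec u)) :
    P.mulVec w = w ∧ (P * L * P).mulVec w = P.mulVec u := by
  have hvw : v ⬝ᵥ w = 0 := hw ▸ dotProduct_one_sub_inv_smul_vecMulVec_mulVec hne _
  have hPw : P *ᵥ w = w := hP ▸ one_sub_vecMulVec_self_mulVec_of_dotProduct_eq_zero hvw
  have hL_inv {x : Fin n → ℝ} : L *ᵥ (L⁻¹ *ᵥ x) = x := by
    rw [mulVec_mulVec, mul_nonsing_inv L hL, one_mulVec]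
  have hLw : L *ᵥ w = u - ((v ⬝ᵥ vbar)⁻¹ * (v ⬝ᵥ L⁻¹ *ᵥ u)) • v := by
    rw [hw, one_sub_smul_vecMulVec_mulVec, mulVec_sub, mulVec_smul, hvbar, hL_inv, hL_inv]
  refine ⟨hPw, ?_⟩
  rw [← mulVec_mulVec, hPw, ← mulVec_mulVec, hLw, mulVec_sub, mulVec_smul, hP,
    one_sub_vecMulVec_self_mulVec_self hv, smul_zero, sub_zero]
end

section
/- (Projection onto the constrained Stiefel set.) Let X₁ be a real n×k matrix with singular value decomposition X₁ = U₁ Σ₁ V₁ᵀ, where U₁ is n×k with U₁ᵀ U₁ = I_k, V₁ is an orthogonal k×k matrix, and Σ₁ is diagonal with strictly positive diagonal entries. Let B be a real n×k matrix and suppose U₁ᵀ B = U₂ Σ₂ V₂ᵀ with U₂, V₂ orthogonal k×k matrices and Σ₂ diagonal with strictly positive diagonal entries. Set X* = U₁ U₂ V₂ᵀ and Q* = V₁ U₂ V₂ᵀ. Then X* ∈ St(n,k), X*ᵀ B is symmetric positive semidefinite, Q* is orthogonal, and the pair (X*, Q*) attains the minimum of ‖X − X₁ Q‖_F over all X ∈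 St(n,k) with Xᵀ B symmetric positive semidefinite and all orthogonal k×k matrices Q; that is, ‖X* − X₁ Q*‖_F ≤ ‖X − X₁ Q‖_F for all such X and Q. -/
open Matrix

private lemma diag_entry_le_one_s6 {n k : ℕ} (U X : Matrix (Fin n) (Fin k) ℝ)
    (hU : Uᵀ * U = 1) (hX : Xᵀ * X = 1)
    (W : Matrix (Fin k) (Fin k) ℝ) (hW : Wᵀ * W = 1) (i : Fin k) :
    (Uᵀ * X * W) i i ≤ 1 := by
  set M : Matrix (Fin k) (Fin k) ℝ := Uᵀ * X * W with hM
  set N : Matrix (Fin n) (Fin k) ℝ := (1 - U * Uᵀ) * X * W with hN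
  have hNt : Nᵀ * N = 1 - Mᵀ * M := by
    rw [hN, hM]
    simp only [Matrix.transpose_mul, Matrix.transpose_sub, Matrix.transpose_one,
      Matrix.transpose_transpose, Matrix.mul_sub, Matrix.sub_mul, Matrix.one_mul,
      Matrix.mul_one, Matrix.mul_assoc]
    rw [← Matrix.mul_assoc Uᵀ U, hU, Matrix.one_mul]
    rw [← Matrix.mul_assoc Xᵀ X, hX, Matrix.one_mul, hW]
    abel
  have hMM : Mᵀ * M = 1 - Nᵀ * N := by rw [hNt]; abel
  have e1 : (Mᵀ * M) i i = ∑ j, (M j i) ^ 2 := by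
    simp [Matrix.mul_apply, sq]
  have e2 : (Nᵀ * N) i i = ∑ j, (N j i) ^ 2 := by
    simp [Matrix.mul_apply, sq]
  have h1 : (Mᵀ * M) i i ≤ 1 := by
    have := congrArg (fun A : Matrix (Fin k) (Fin k) ℝ => A i i) hMM
    simp only [Matrix.sub_apply, Matrix.one_apply_eq] at this
    have hnn : 0 ≤ (Nᵀ * N) i i := by rw [e2]; positivity
    linarith
  have h2 : (M i i) ^ 2 ≤ (Mᵀ * M) i i := by
    rw [e1]
    exact Finset.single_le_sum (f := fun j => (M j i) ^ 2)
      (fun j _ => sq_nonneg _) (Finset.mem_univ i)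
  nlinarith

private lemma trace_diag_mul {k : ℕ} (d : Fin k → ℝ) (M : Matrix (Fin k) (Fin k) ℝ) :
    (Matrix.diagonal d * M).trace = ∑ i, d i * M i i := by
  simp [Matrix.trace, Matrix.diag, Matrix.diagonal_mul]

private lemma trace_expand {n k : ℕ} (X₁ X : Matrix (Fin n) (Fin k) ℝ)
    (Q : Matrix (Fin k) (Fin k) ℝ) (hX : Xᵀ * X = 1) (hQ : Qᵀ * Q = 1) :
    ((X - X₁ * Q)ᵀ * (X - X₁ * Q)).trace
      = (k : ℝ) + (X₁ᵀ * X₁).trace - 2 * (Qᵀ * X₁ᵀ * X).trace := by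
  have hQQ : Q * Qᵀ = 1 := mul_eq_one_comm.mp hQ
  have expand : (X - X₁ * Q)ᵀ * (X - X₁ * Q)
      = Xᵀ * X - Xᵀ * (X₁ * Q) - (Qᵀ * X₁ᵀ * X - Qᵀ * (X₁ᵀ * X₁) * Q) := by
    simp only [Matrix.transpose_mul, Matrix.transpose_sub, Matrix.sub_mul, Matrix.mul_sub,
      Matrix.mul_assoc]
    abel
  rw [expand]
  simp only [Matrix.trace_sub]
  have t1 : (Xᵀ * X).trace = (k : ℝ) := by rw [hX, Matrix.trace_one]; simp
  have t2 : (Xᵀ * (X₁ * Q)).trace = (Qᵀ * X₁ᵀ * X).trace := by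
    rw [← Matrix.trace_transpose (Xᵀ * (X₁ * Q))]
    congr 1
    simp [Matrix.transpose_mul, Matrix.mul_assoc]
  have t3 : (Qᵀ * (X₁ᵀ * X₁) * Q).trace = (X₁ᵀ * X₁).trace := by
    rw [Matrix.mul_assoc, Matrix.trace_mul_comm, Matrix.mul_assoc, hQQ, Matrix.mul_one]
  rw [t1, t2, t3]; ring

private lemma trace_le {n k : ℕ} (X₁ U₁ : Matrix (Fin n) (Fin k) ℝ)
    (V₁ : Matrix (Fin k) (Fin k) ℝ) (σ₁ : Fin k → ℝ) (hσ₁ : ∀ i, 0 ≤ σ₁ i)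
    (hU₁ : U₁ᵀ * U₁ = 1) (hV₁ : V₁ᵀ * V₁ = 1)
    (hX₁ : X₁ = U₁ * Matrix.diagonal σ₁ * V₁ᵀ)
    (X : Matrix (Fin n) (Fin k) ℝ) (Q : Matrix (Fin k) (Fin k) ℝ)
    (hX : Xᵀ * X = 1) (hQ : Qᵀ * Q = 1) :
    (Qᵀ * X₁ᵀ * X).trace ≤ ∑ i, σ₁ i := by
  have hQQ : Q * Qᵀ = 1 := mul_eq_one_comm.mp hQ
  have hW : (Qᵀ * V₁)ᵀ * (Qᵀ * V₁) = 1 := by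
    rw [Matrix.transpose_mul, Matrix.transpose_transpose, Matrix.mul_assoc,
      ← Matrix.mul_assoc Q Qᵀ, hQQ, Matrix.one_mul, hV₁]
  have key : (Qᵀ * X₁ᵀ * X).trace
      = (Matrix.diagonal σ₁ * (U₁ᵀ * X * (Qᵀ * V₁))).trace := by
    have h1 : Qᵀ * X₁ᵀ * X = (Qᵀ * V₁) * (Matrix.diagonal σ₁ * (U₁ᵀ * X)) := by
      rw [hX₁]
      simp only [Matrix.transpose_mul, Matrix.transpose_transpose,
        Matrix.diagonal_transpose, Matrix.mul_assoc]
    rw [h1, Matrix.trace_mul_comm]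
    congr 1
    simp only [Matrix.mul_assoc]
  rw [key, trace_diag_mul]
  calc ∑ i, σ₁ i * (U₁ᵀ * X * (Qᵀ * V₁)) i i
      ≤ ∑ i, σ₁ i * 1 := by
        apply Finset.sum_le_sum
        intro i _
        exact mul_le_mul_of_nonneg_left
          (diag_entry_le_one_s6 U₁ X hU₁ hX (Qᵀ * V₁) hW i) (hσ₁ i)
    _ = ∑ i, σ₁ i := by simp

/-- (Projection onto the constrained Stiefel set.) Given SVDs `X₁ = U₁ Σ₁ V₁ᵀ` and
`U₁ᵀ B = U₂ Σ₂ V₂ᵀ` with strictly positive singular values, the pair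
`X* = U₁ U₂ V₂ᵀ`, `Q* = V₁ U₂ V₂ᵀ` attains the minimum of `‖X − X₁ Q‖_F` over all
`X ∈ St(n,k)` with `Xᵀ B` symmetric positive semidefinite and all orthogonal `Q`. -/
theorem stmt_6 {n k : ℕ}
    (X₁ U₁ : Matrix (Fin n) (Fin k) ℝ) (V₁ : Matrix (Fin k) (Fin k) ℝ)
    (σ₁ : Fin k → ℝ) (hσ₁ : ∀ i, 0 < σ₁ i)
    (hU₁ : U₁ᵀ * U₁ = 1) (hV₁ : V₁ᵀ * V₁ = 1)
    (hX₁ : X₁ = U₁ * Matrix.diagonal σ₁ * V₁ᵀ)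
    (B : Matrix (Fin n) (Fin k) ℝ)
    (U₂ V₂ : Matrix (Fin k) (Fin k) ℝ)
    (σ₂ : Fin k → ℝ) (hσ₂ : ∀ i, 0 < σ₂ i)
    (hU₂ : U₂ᵀ * U₂ = 1) (hV₂ : V₂ᵀ * V₂ = 1)
    (hB : U₁ᵀ * B = U₂ * Matrix.diagonal σ₂ * V₂ᵀ)
    (Xs : Matrix (Fin n) (Fin k) ℝ) (hXs : Xs = U₁ * U₂ * V₂ᵀ)
    (Qs : Matrix (Fin k) (Fin k) ℝ) (hQs : Qs = V₁ * U₂ * V₂ᵀ) :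
    Xsᵀ * Xs = 1 ∧
    (Xsᵀ * B).PosSemidef ∧
    Qsᵀ * Qs = 1 ∧
    ∀ (X : Matrix (Fin n) (Fin k) ℝ) (Q : Matrix (Fin k) (Fin k) ℝ),
      Xᵀ * X = 1 → (Xᵀ * B).PosSemidef → Qᵀ * Q = 1 →
      frobNorm (Xs - X₁ * Qs) ≤ frobNorm (X - X₁ * Q) := by
  have hV₂V₂ : V₂ * V₂ᵀ = 1 := mul_eq_one_comm.mp hV₂
  have hU₂U₂ : U₂ * U₂ᵀ = 1 := mul_eq_one_comm.mp hU₂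
  have hXsXs : Xsᵀ * Xs = 1 := by
    rw [hXs]
    simp only [Matrix.transpose_mul, Matrix.transpose_transpose, Matrix.mul_assoc]
    rw [← Matrix.mul_assoc U₁ᵀ U₁, hU₁, Matrix.one_mul,
      ← Matrix.mul_assoc U₂ᵀ U₂, hU₂, Matrix.one_mul, hV₂V₂]
  have hQsQs : Qsᵀ * Qs = 1 := by
    rw [hQs]
    simp only [Matrix.transpose_mul, Matrix.transpose_transpose, Matrix.mul_assoc]
    rw [← Matrix.mul_assoc V₁ᵀ V₁, hV₁, Matrix.one_mul,
      ← Matrix.mul_assoc U₂ᵀ U₂, hU₂, Matrix.one_mul, hV₂V₂]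
  have hXsB : Xsᵀ * B = V₂ * Matrix.diagonal σ₂ * V₂ᵀ := by
    rw [hXs]
    simp only [Matrix.transpose_mul, Matrix.transpose_transpose, Matrix.mul_assoc]
    rw [hB]
    simp only [Matrix.mul_assoc]
    rw [← Matrix.mul_assoc U₂ᵀ U₂, hU₂, Matrix.one_mul]
  have hPSD : (Xsᵀ * B).PosSemidef := by
    rw [hXsB]
    exact Matrix.PosSemidef.mul_mul_conjTranspose_same
      (Matrix.posSemidef_diagonal_iff.mpr (fun i => (hσ₂ i).le)) V₂
  refine ⟨hXsXs, hPSD, hQsQs, ?_⟩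
  intro X Q hX _ hQ
  have hts : (Qsᵀ * X₁ᵀ * Xs).trace = ∑ i, σ₁ i := by
    have h1 : Qsᵀ * X₁ᵀ * Xs
        = V₂ * (U₂ᵀ * (Matrix.diagonal σ₁ * (U₂ * V₂ᵀ))) := by
      rw [hQs, hXs, hX₁]
      simp only [Matrix.transpose_mul, Matrix.transpose_transpose,
        Matrix.diagonal_transpose, Matrix.mul_assoc]
      rw [← Matrix.mul_assoc V₁ᵀ V₁, hV₁, Matrix.one_mul,
        ← Matrix.mul_assoc U₁ᵀ U₁, hU₁, Matrix.one_mul]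
    rw [h1, Matrix.trace_mul_comm]
    have h2 : U₂ᵀ * (Matrix.diagonal σ₁ * (U₂ * V₂ᵀ)) * V₂
        = U₂ᵀ * (Matrix.diagonal σ₁ * U₂) := by
      simp only [Matrix.mul_assoc]
      rw [hV₂, Matrix.mul_one]
    rw [h2, Matrix.trace_mul_comm, Matrix.mul_assoc, hU₂U₂, Matrix.mul_one,
      Matrix.trace_diagonal]
  have hle : (Qᵀ * X₁ᵀ * X).trace ≤ ∑ i, σ₁ i :=
    trace_le X₁ U₁ V₁ σ₁ (fun i => (hσ₁ i).le) hU₁ hV₁ hX₁ X Q hX hQ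
  unfold frobNorm
  apply Real.sqrt_le_sqrt
  rw [trace_expand X₁ Xs Qs hXsXs hQsQs, trace_expand X₁ X Q hX hQ, hts]
  linarith
end

section
/- (Eigenvalue bound for Lagrange multipliers at SSM stationary points.) Let L be a symmetric real n×n matrix, and let v₁,…,v_k ∈ ℝⁿ be orthonormal vectors with L v_i = d_i v_i for real numbers d₁ ≤ … ≤ d_k. Let X ∈ St(n,k) have columns x₁,…,x_k, and let λ₁,…,λ_k be real numbers such that for each j ∈ {1,…,k}, with P_j = I_n − Σ_{i ≠ j} x_i x_iᵀ, the matrix P_j L P_j − λ_j P_j is positive semidefinite (the second-order optimality condition). Then λ_j ≤ d_k for every j ∈ {1,…,k}; in particular max{λ₁,…,λ_k} ≤ d_k. -/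
open Matrix

private lemma exists_nontrivial_kernel {k : ℕ} (j : Fin (k + 1))
    (f : (Fin (k + 1) → ℝ) →ₗ[ℝ] ({ i // i ∈ Finset.univ.erase j } → ℝ)) :
    ∃ c : Fin (k + 1) → ℝ, c ≠ 0 ∧ f c = 0 := by
  have hcard : Fintype.card { i // i ∈ Finset.univ.erase j } = k := by
    simp [Fintype.card_coe]
  have hlt : Module.finrank ℝ ({ i // i ∈ Finset.univ.erase j } → ℝ)
      < Module.finrank ℝ (Fin (k + 1) → ℝ) := by
    simp [Module.finrank_pi, hcard]
  have hninj : ¬ Function.Injective f := fun hinj =>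
    absurd (LinearMap.finrank_le_finrank_of_injective hinj) (not_le.mpr hlt)
  rw [← LinearMap.ker_eq_bot] at hninj
  obtain ⟨c, hc, hc0⟩ := (Submodule.ne_bot_iff _).mp hninj
  exact ⟨c, hc0, hc⟩

private lemma dot_sum {ι m : Type*} [Fintype ι] [Fintype m]
    (w : m → ℝ) (a : ι → ℝ) (u : ι → m → ℝ) :
    w ⬝ᵥ (∑ i, a i • u i) = ∑ i, a i * (w ⬝ᵥ u i) := by
  simp only [dotProduct, Finset.sum_apply, Pi.smul_apply, smul_eq_mul, Finset.mul_sum]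
  rw [Finset.sum_comm]
  exact Finset.sum_congr rfl fun i _ => Finset.sum_congr rfl fun r _ => by ring

private lemma sum_mulVec' {ι n : Type*} [Fintype n] (s : Finset ι)
    (M : ι → Matrix n n ℝ) (y : n → ℝ) :
    (∑ i ∈ s, M i) *ᵥ y = ∑ i ∈ s, (M i) *ᵥ y := by
  funext r
  simp only [mulVec, dotProduct, Matrix.sum_apply, Finset.sum_mul, Finset.sum_apply]
  rw [Finset.sum_comm]

private lemma mulVec_sum' {ι n : Type*} [Fintype n] [Fintype ι]
    (M : Matrix n n ℝ) (a : ι → ℝ) (u : ι → n → ℝ) :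
    M *ᵥ (∑ i, a i • u i) = ∑ i, a i • (M *ᵥ u i) := by
  funext r
  simp only [mulVec, dotProduct, Finset.sum_apply, Pi.smul_apply, smul_eq_mul,
    Finset.mul_sum]
  rw [Finset.sum_comm]
  exact Finset.sum_congr rfl fun i _ => Finset.sum_congr rfl fun c _ => by ring

/-- (Eigenvalue bound for Lagrange multipliers at SSM stationary points.)
If `L` is symmetric with orthonormal eigenvectors `v₁,…,v_k` and eigenvalues
`d₁ ≤ … ≤ d_k`, `X ∈ St(n,k)` has columns `x₁,…,x_k`, and each
`P_j L P_j − λ_j P_j` with `P_j = I − Σ_{i≠j} x_i x_iᵀ` is positive semidefinite,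
then `λ_j ≤ d_k` for every `j`. (Here the index set `{1,…,k}` is `Fin (k+1)`.) -/
theorem stmt_7 {n k : ℕ}
    (L : Matrix (Fin n) (Fin n) ℝ) (hL : L.IsSymm)
    (v : Fin (k + 1) → (Fin n → ℝ))
    (hvON : ∀ i j, v i ⬝ᵥ v j = if i = j then (1 : ℝ) else 0)
    (d : Fin (k + 1) → ℝ) (hd : Monotone d)
    (hEig : ∀ i, L.mulVec (v i) = d i • v i)
    (x : Fin (k + 1) → (Fin n → ℝ))
    (hxON : ∀ i j, x i ⬝ᵥ x j = if i = j then (1 : ℝ) else 0)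
    (lam : Fin (k + 1) → ℝ)
    (P : Fin (k + 1) → Matrix (Fin n) (Fin n) ℝ)
    (hPdef : ∀ j, P j =
      1 - ∑ i ∈ Finset.univ.erase j, Matrix.vecMulVec (x i) (x i))
    (hSOC : ∀ j, ∀ y : Fin n → ℝ,
      0 ≤ y ⬝ᵥ (P j * L * P j - lam j • P j).mulVec y) :
    ∀ j, lam j ≤ d (Fin.last k) := by
  intro j
  set S := Finset.univ.erase j with hS
  let f : (Fin (k + 1) → ℝ) →ₗ[ℝ] ({ i // i ∈ S } → ℝ) :=
    { toFun := fun c i => ∑ m, c m * (x i.1 ⬝ᵥ v m)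
      map_add' := by intro a b; funext i; simp [add_mul, Finset.sum_add_distrib]
      map_smul' := by intro r a; funext i; simp [Finset.mul_sum, mul_assoc]
      }
  obtain ⟨c, hc0, hfc⟩ := exists_nontrivial_kernel j f
  set y : Fin n → ℝ := ∑ m, c m • v m with hy
  have hxy : ∀ i ∈ S, x i ⬝ᵥ y = 0 := by
    intro i hi
    have h1 := congrFun hfc ⟨i, hi⟩
    rw [hy, dot_sum]
    simpa [f] using h1
  have hvy : ∀ m, y ⬝ᵥ v m = c m := by
    intro m
    rw [dotProduct_comm, hy, dot_sum]
    simp [hvON, Finset.sum_ite_eq']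
  have hyy : y ⬝ᵥ y = ∑ m, c m ^ 2 := by
    rw [hy, dot_sum]
    refine Finset.sum_congr rfl fun m _ => ?_
    rw [← hy, hvy m, sq]
  have hyypos : 0 < y ⬝ᵥ y := by
    rw [hyy]
    have : ∃ m, c m ≠ 0 := by
      by_contra h; push_neg at h; exact hc0 (funext h)
    obtain ⟨m, hm⟩ := this
    exact Finset.sum_pos' (fun i _ => sq_nonneg _) ⟨m, Finset.mem_univ m, by positivity⟩
  have hPy : (P j).mulVec y = y := by
    rw [hPdef j, sub_mulVec, one_mulVec, sum_mulVec']
    have hz : ∀ i ∈ S, (vecMulVec (x i) (x i)) *ᵥ y = 0 := by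
      intro i hi
      funext r
      have := hxy i hi
      simp only [mulVec, dotProduct, vecMulVec_apply, Pi.zero_apply, mul_assoc,
        ← Finset.mul_sum]
      rw [show (∑ m, x i m * y m) = 0 from this]
      ring
    rw [Finset.sum_congr rfl hz]
    simp
  have hPsymm : (P j).IsSymm := by
    rw [hPdef j]
    refine Matrix.isSymm_one.sub ?_
    rw [Matrix.IsSymm]
    funext a b
    simp only [transpose_apply, Matrix.sum_apply, vecMulVec_apply]
    exact Finset.sum_congr rfl fun i _ => by ring
  have hyP : vecMul y (P j) = y := by
    rw [← Matrix.mulVec_transpose, hPsymm.eq, hPy]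
  have hq := hSOC j y
  rw [sub_mulVec, dotProduct_sub, Matrix.smul_mulVec, dotProduct_smul, hPy] at hq
  have hPLP : y ⬝ᵥ (P j * L * P j).mulVec y = y ⬝ᵥ L.mulVec y := by
    rw [← Matrix.mulVec_mulVec, ← Matrix.mulVec_mulVec, hPy, Matrix.dotProduct_mulVec, hyP]
  rw [hPLP] at hq
  have hyLy : y ⬝ᵥ L.mulVec y = ∑ m, c m ^ 2 * d m := by
    have hLy : L.mulVec y = ∑ m, (c m * d m) • v m := by
      rw [hy, mulVec_sum']
      exact Finset.sum_congr rfl fun m _ => by rw [hEig m, smul_smul]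
    rw [hLy, dot_sum]
    refine Finset.sum_congr rfl fun m _ => ?_
    rw [hvy m]; ring
  have hbound : y ⬝ᵥ L.mulVec y ≤ d (Fin.last k) * (y ⬝ᵥ y) := by
    rw [hyLy, hyy, Finset.mul_sum]
    refine Finset.sum_le_sum fun m _ => ?_
    have := hd (Fin.le_last m)
    nlinarith [sq_nonneg (c m)]
  have hmain : lam j * (y ⬝ᵥ y) ≤ d (Fin.last k) * (y ⬝ᵥ y) := by
    simp only [smul_eq_mul] at hq
    linarith
  exact le_of_mul_le_mul_right hmain hyypos
end

section
/- (Global-optimality eigenvalue gap condition, k = 2 case.) Let L be a symmetric real n×n matrix and let v₁, v₂ ∈ ℝⁿ be orthonormal with L v₁ = d₁ v₁ and L v₂ = d₂ v₂ where d₁ ≤ d₂; let V be the n×2 matrix with columns v₁, v₂. Let X ∈ St(n,2) and let Λ be a symmetric 2×2 matrix with eigenvalues λ₁, λ₂ satisfying λ₁ ≤ d₂ and λ₂ ≤ d₂, and set B = L X − X Λ. Let s₁ denote the smallest singular value of the 2×2 matrix Vᵀ B, i.e., s₁ = min over unit vectors u ∈ ℝ² of ‖Vᵀ B u‖. If s₁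 > d₂ − d₁, then λ₁ < d₁ and λ₂ < d₁. -/
open Matrix

private lemma stmt_8_arith (d₁ d₂ μ a b : ℝ) (hd : d₁ ≤ d₂) (h1 : d₁ ≤ μ) (h2 : μ ≤ d₂)
    (hb : a ^ 2 + b ^ 2 ≤ 1)
    (hsq : (d₂ - d₁) ^ 2 < ((d₁ - μ) * a) ^ 2 + ((d₂ - μ) * b) ^ 2) : False := by
  have e1 : (d₁ - μ) ^ 2 ≤ (d₂ - d₁) ^ 2 := by nlinarith
  have e2 : (d₂ - μ) ^ 2 ≤ (d₂ - d₁) ^ 2 := by nlinarith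
  nlinarith [sq_nonneg a, sq_nonneg b, sq_nonneg (d₂ - d₁),
    mul_le_mul_of_nonneg_right e1 (sq_nonneg a),
    mul_le_mul_of_nonneg_right e2 (sq_nonneg b)]

/-- (Global-optimality eigenvalue gap condition, `k = 2` case.) Let `L` be symmetric with
orthonormal eigenvectors `v₁, v₂` for eigenvalues `d₁ ≤ d₂`, `V` the `n×2` matrix with
columns `v₁, v₂`, `X ∈ St(n,2)`, `Λ` a symmetric `2×2` matrix with (orthonormal)
eigenpairs `(λᵢ, uᵢ)` satisfying `λᵢ ≤ d₂`, and `B = L X − X Λ`. If the smallest singular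
value of `Vᵀ B` exceeds `d₂ − d₁` (i.e. `‖Vᵀ B w‖ > d₂ − d₁` for every unit vector `w`),
then `λ₁ < d₁` and `λ₂ < d₁`. -/
theorem stmt_8 {n : ℕ}
    (L : Matrix (Fin n) (Fin n) ℝ) (hL : L.IsSymm)
    (v₁ v₂ : Fin n → ℝ)
    (h11 : v₁ ⬝ᵥ v₁ = 1) (h22 : v₂ ⬝ᵥ v₂ = 1) (h12 : v₁ ⬝ᵥ v₂ = 0)
    (d₁ d₂ : ℝ) (hd : d₁ ≤ d₂)
    (hv₁ : L.mulVec v₁ = d₁ • v₁) (hv₂ : L.mulVec v₂ = d₂ • v₂)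
    (V : Matrix (Fin n) (Fin 2) ℝ) (hV : V = Matrix.of fun i j => ![v₁ i, v₂ i] j)
    (X : Matrix (Fin n) (Fin 2) ℝ) (hX : Xᵀ * X = 1)
    (Λ : Matrix (Fin 2) (Fin 2) ℝ) (hΛ : Λ.IsSymm)
    (lam : Fin 2 → ℝ) (uu : Fin 2 → (Fin 2 → ℝ))
    (huON : ∀ i j, uu i ⬝ᵥ uu j = if i = j then (1 : ℝ) else 0)
    (hEig : ∀ i, Λ.mulVec (uu i) = lam i • uu i)
    (hlam : ∀ i, lam i ≤ d₂)
    (B : Matrix (Fin n) (Fin 2) ℝ) (hB : B = L * X - X * Λ)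
    (hs : ∀ w : Fin 2 → ℝ, w ⬝ᵥ w = 1 →
      d₂ - d₁ < Real.sqrt ((Vᵀ * B).mulVec w ⬝ᵥ (Vᵀ * B).mulVec w)) :
    ∀ i, lam i < d₁ := by

  intro i
  by_contra hcon
  push_neg at hcon
  set u := uu i with hu
  set μ := lam i with hmu
  set y := X.mulVec u with hy
  have hu1 : u ⬝ᵥ u = 1 := by simpa using huON i i
  have hyy : y ⬝ᵥ y = 1 := by
    have : y ⬝ᵥ y = (y ᵥ* X) ⬝ᵥ u := by rw [hy, dotProduct_mulVec]
    rw [this, ← Matrix.mulVec_transpose, hy, Matrix.mulVec_mulVec, hX, Matrix.one_mulVec, hu1]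
  set a := v₁ ⬝ᵥ y with ha
  set b := v₂ ⬝ᵥ y with hbdef
  -- Bessel
  have hbessel : a ^ 2 + b ^ 2 ≤ 1 := by
    have hr : (0:ℝ) ≤ (y - a • v₁ - b • v₂) ⬝ᵥ (y - a • v₁ - b • v₂) :=
      Finset.sum_nonneg fun j _ => mul_self_nonneg _
    have h1 : y ⬝ᵥ v₁ = a := dotProduct_comm _ _
    have h2 : y ⬝ᵥ v₂ = b := dotProduct_comm _ _
    have h21 : v₂ ⬝ᵥ v₁ = 0 := by rw [dotProduct_comm]; exact h12
    simp only [sub_dotProduct, dotProduct_sub, smul_dotProduct,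
      dotProduct_smul, smul_eq_mul, hyy, h11, h22, h12, h21, h1, h2] at hr
    nlinarith [hr]
  -- eigenvalue action
  have hz : B.mulVec u = L.mulVec y - μ • y := by
    rw [hB, Matrix.sub_mulVec, ← Matrix.mulVec_mulVec, ← Matrix.mulVec_mulVec, hEig i,
      Matrix.mulVec_smul, hy]
  have hLy1 : v₁ ⬝ᵥ L.mulVec y = d₁ * a := by
    rw [dotProduct_mulVec, ← Matrix.mulVec_transpose, hL.eq, hv₁, smul_dotProduct]
    rfl
  have hLy2 : v₂ ⬝ᵥ L.mulVec y = d₂ * b := by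
    rw [dotProduct_mulVec, ← Matrix.mulVec_transpose, hL.eq, hv₂, smul_dotProduct]
    rfl
  have hz1 : v₁ ⬝ᵥ B.mulVec u = (d₁ - μ) * a := by
    rw [hz, dotProduct_sub, hLy1, dotProduct_smul, smul_eq_mul, ← ha]
    ring
  have hz2 : v₂ ⬝ᵥ B.mulVec u = (d₂ - μ) * b := by
    rw [hz, dotProduct_sub, hLy2, dotProduct_smul, smul_eq_mul, ← hbdef]
    ring
  have hVtz : (Vᵀ * B).mulVec u = ![(d₁ - μ) * a, (d₂ - μ) * b] := by
    rw [← Matrix.mulVec_mulVec]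
    funext j
    fin_cases j
    · simpa [Matrix.mulVec, dotProduct, hV] using hz1
    · simpa [Matrix.mulVec, dotProduct, hV] using hz2
  have hS : (Vᵀ * B).mulVec u ⬝ᵥ (Vᵀ * B).mulVec u
      = ((d₁ - μ) * a) ^ 2 + ((d₂ - μ) * b) ^ 2 := by
    rw [hVtz]
    simp [dotProduct, Fin.sum_univ_two]
    ring
  have hlt := hs u hu1
  rw [hS] at hlt
  have hd0 : (0:ℝ) ≤ d₂ - d₁ := by linarith
  have hsq : (d₂ - d₁) ^ 2 < ((d₁ - μ) * a) ^ 2 + ((d₂ - μ) * b) ^ 2 := by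
    have hnn : (0:ℝ) ≤ ((d₁ - μ) * a) ^ 2 + ((d₂ - μ) * b) ^ 2 := by positivity
    exact (Real.lt_sqrt hd0).mp hlt
  exact stmt_8_arith d₁ d₂ μ a b hd hcon (hlam i) hbessel hsq
end

section
/- (Bracketing the Lagrange multiplier in the spherical trust-region problem.) Let A be a symmetric real n×n matrix with smallest eigenvalue d₁, let V₁ be a real n×r matrix whose columns form an orthonormal basis of the eigenspace of A for the eigenvalue d₁, and let b ∈ ℝⁿ. Suppose λ < d₁ is a real number such that the vector x = (A − λ I_n)⁻¹ b satisfies ‖x‖ = 1. Then d₁ − ‖b‖ ≤ λ ≤ d₁ − ‖V₁ᵀ b‖. -/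
open Matrix

/-! Write `M = A - l I`, so that `M x = b`. Since `xᵀ A x ≥ d₁` on the unit sphere,
`d₁ - l ≤ xᵀ M x = xᵀ b ≤ ‖b‖` by Cauchy–Schwarz. On the other hand `V₁ᵀ A = d₁ V₁ᵀ`,
so `V₁ᵀ b = (d₁ - l) V₁ᵀ x`, and Bessel's inequality `‖V₁ᵀ x‖ ≤ ‖x‖ = 1` gives
`‖V₁ᵀ b‖ ≤ d₁ - l`. -/

namespace Matrix

variable {m k : Type*} [Fintype m] [Fintype k]

lemma dotProduct_le_sqrt_mul_sqrt (u v : m → ℝ) : u ⬝ᵥ v ≤ √(u ⬝ᵥ u) * √(v ⬝ᵥ v) := by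
  simpa only [dotProduct, sq] using Real.sum_mul_le_sqrt_mul_sqrt Finset.univ u v

lemma transpose_mulVec_dotProduct_self_le [DecidableEq k] {V : Matrix m k ℝ} (hV : Vᵀ * V = 1)
    (x : m → ℝ) :
    Vᵀ *ᵥ x ⬝ᵥ Vᵀ *ᵥ x ≤ x ⬝ᵥ x := by
  set y := Vᵀ *ᵥ x
  have hxy : x ⬝ᵥ V *ᵥ y = y ⬝ᵥ y := by
    rw [dotProduct_mulVec, ← mulVec_transpose, dotProduct_comm]
  have hyy : V *ᵥ y ⬝ᵥ V *ᵥ y = y ⬝ᵥ y := by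
    rw [dotProduct_mulVec, ← mulVec_transpose, mulVec_mulVec, hV, one_mulVec, dotProduct_comm]
  have hres : x ⬝ᵥ x - y ⬝ᵥ y = (x - V *ᵥ y) ⬝ᵥ (x - V *ᵥ y) := by
    rw [sub_dotProduct, dotProduct_sub, dotProduct_sub, dotProduct_comm (V *ᵥ y) x, hxy, hyy]
    ring
  have hnonneg := dotProduct_star_self_nonneg (x - V *ᵥ y)
  rw [star_trivial] at hnonneg
  linarith

lemma transpose_mul_eq_smul_transpose {R : Type*} [CommRing R] {A : Matrix m m R}
    (hA : A.IsSymm) {V : Matrix m k R} {d : R} (hV : ∀ c, A *ᵥ (V *ᵥ c) = d • V *ᵥ c) :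
    Vᵀ * A = d • Vᵀ := by
  have hAV : A * V = d • V := ext_iff_mulVec.2 fun c => by rw [← mulVec_mulVec, hV, smul_mulVec]
  simpa only [transpose_mul, transpose_smul, hA.eq] using congrArg transpose hAV

variable [DecidableEq m]

lemma sub_smul_one_mulVec (A : Matrix m m ℝ) (l : ℝ) (x : m → ℝ) :
    (A - l • 1) *ᵥ x = A *ᵥ x - l • x := by
  rw [sub_mulVec, smul_mulVec, one_mulVec]

lemma posDef_sub_smul_one {A : Matrix m m ℝ} (hA : A.IsSymm) {d l : ℝ}
    (hmin : ∀ x, d * (x ⬝ᵥ x) ≤ x ⬝ᵥ A *ᵥ x) (hl : l < d) : (A - l • 1).PosDef := by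
  refine posDef_iff_dotProduct_mulVec.2 ⟨?_, fun x hx => ?_⟩
  · simp only [IsHermitian, conjTranspose_eq_transpose_of_trivial, transpose_sub, transpose_smul,
      transpose_one, hA.eq]
  · have hpos : 0 < x ⬝ᵥ x := by simpa using dotProduct_star_self_pos_iff.2 hx
    rw [star_trivial, sub_smul_one_mulVec, dotProduct_sub, dotProduct_smul, smul_eq_mul]
    nlinarith [hmin x]

lemma sub_sqrt_le_of_sub_smul_one_mulVec {A : Matrix m m ℝ} {d l : ℝ}
    (hmin : ∀ x, d * (x ⬝ᵥ x) ≤ x ⬝ᵥ A *ᵥ x) {x b : m → ℝ} (hb : (A - l • 1) *ᵥ x = b)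
    (hx : x ⬝ᵥ x = 1) : d - √(b ⬝ᵥ b) ≤ l := by
  have hxb : x ⬝ᵥ b = x ⬝ᵥ A *ᵥ x - l := by
    rw [← hb, sub_smul_one_mulVec, dotProduct_sub, dotProduct_smul, smul_eq_mul, hx, mul_one]
  have hAx := hmin x
  have hcs := dotProduct_le_sqrt_mul_sqrt x b
  rw [hx, mul_one] at hAx
  rw [hx, Real.sqrt_one, one_mul] at hcs
  linarith

lemma le_sub_sqrt_of_sub_smul_one_mulVec [DecidableEq k] {A : Matrix m m ℝ} (hA : A.IsSymm)
    {V : Matrix m k ℝ} (hV : Vᵀ * V = 1) {d l : ℝ} (hVeig : ∀ c, A *ᵥ (V *ᵥ c) = d • V *ᵥ c)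
    (hl : l ≤ d)
    {x b : m → ℝ} (hb : (A - l • 1) *ᵥ x = b) (hx : x ⬝ᵥ x ≤ 1) :
    l ≤ d - √(Vᵀ *ᵥ b ⬝ᵥ Vᵀ *ᵥ b) := by
  have hVb : Vᵀ *ᵥ b = (d - l) • Vᵀ *ᵥ x := by
    rw [← hb, mulVec_mulVec, Matrix.mul_sub, transpose_mul_eq_smul_transpose hA hVeig,
      Matrix.mul_smul, Matrix.mul_one, ← sub_smul, smul_mulVec]
  have hbessel := (transpose_mulVec_dotProduct_self_le hV x).trans hx
  rw [le_sub_comm, Real.sqrt_le_left (sub_nonneg.2 hl), hVb, dotProduct_smul, smul_dotProduct,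
    smul_eq_mul, smul_eq_mul, ← mul_assoc, ← sq]
  nlinarith [sq_nonneg (d - l)]

end Matrix

theorem stmt_14_general {n r : ℕ}
    (A : Matrix (Fin n) (Fin n) ℝ) (hA : A.IsSymm)
    (d₁ : ℝ)
    (hmin : ∀ x : Fin n → ℝ, d₁ * (x ⬝ᵥ x) ≤ x ⬝ᵥ A.mulVec x)
    (V₁ : Matrix (Fin n) (Fin r) ℝ)
    (hV₁ : V₁ᵀ * V₁ = 1)
    (hV₁eig : ∀ c : Fin r → ℝ, A.mulVec (V₁.mulVec c) = d₁ • V₁.mulVec c)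
    (b : Fin n → ℝ) (l : ℝ) (hl : l < d₁)
    (x : Fin n → ℝ)
    (hx : x = (A - l • (1 : Matrix (Fin n) (Fin n) ℝ))⁻¹.mulVec b)
    (hxnorm : x ⬝ᵥ x = 1) :
    d₁ - Real.sqrt (b ⬝ᵥ b) ≤ l ∧
    l ≤ d₁ - Real.sqrt (V₁ᵀ.mulVec b ⬝ᵥ V₁ᵀ.mulVec b) := by
  have hM := posDef_sub_smul_one hA hmin hl
  have hb : (A - l • 1) *ᵥ x = b := by
    rw [hx, mulVec_mulVec, mul_nonsing_inv _ ((isUnit_iff_isUnit_det _).1 hM.isUnit), one_mulVec]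
  exact ⟨sub_sqrt_le_of_sub_smul_one_mulVec hmin hb hxnorm,
    le_sub_sqrt_of_sub_smul_one_mulVec hA hV₁ hV₁eig hl.le hb hxnorm.le⟩

/-- (Bracketing the Lagrange multiplier in the spherical trust-region problem.)
Let `A` be symmetric with smallest eigenvalue `d₁` (i.e. `d₁ ‖x‖² ≤ xᵀ A x` for all `x`
and `d₁` is attained by some eigenvector), let the columns of `V₁` form an orthonormal
basis of the eigenspace of `A` for `d₁`, and let `b ∈ ℝⁿ`. If `l < d₁` and
`x = (A − l I)⁻¹ b` satisfies `‖x‖ = 1`, then `d₁ − ‖b‖ ≤ l ≤ d₁ − ‖V₁ᵀ b‖`. -/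
theorem stmt_14 {n r : ℕ}
    (A : Matrix (Fin n) (Fin n) ℝ) (hA : A.IsSymm)
    (d₁ : ℝ)
    (hmin : ∀ x : Fin n → ℝ, d₁ * (x ⬝ᵥ x) ≤ x ⬝ᵥ A.mulVec x)
    (hex : ∃ x : Fin n → ℝ, x ≠ 0 ∧ A.mulVec x = d₁ • x)
    (V₁ : Matrix (Fin n) (Fin r) ℝ)
    (hV₁ : V₁ᵀ * V₁ = 1)
    (hV₁eig : ∀ c : Fin r → ℝ, A.mulVec (V₁.mulVec c) = d₁ • V₁.mulVec c)
    (hspan : ∀ x : Fin n → ℝ, A.mulVec x = d₁ • x → ∃ c : Fin r → ℝ, x = V₁.mulVec c)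
    (b : Fin n → ℝ) (l : ℝ) (hl : l < d₁)
    (x : Fin n → ℝ)
    (hx : x = (A - l • (1 : Matrix (Fin n) (Fin n) ℝ))⁻¹.mulVec b)
    (hxnorm : x ⬝ᵥ x = 1) :
    d₁ - Real.sqrt (b ⬝ᵥ b) ≤ l ∧
    l ≤ d₁ - Real.sqrt (V₁ᵀ.mulVec b ⬝ᵥ V₁ᵀ.mulVec b) :=
  stmt_14_general A hA d₁ hmin V₁ hV₁ hV₁eig b l hl x hx hxnorm
end

section
/- (Centering transformation for the partitioned supervised Laplacian eigenmap constraints.) Let p be a real number, let X be a real (m+n)×k matrix satisfying 𝟙ᵀ X = 0 (each column of X sums to zero) and Xᵀ X = p I_k, and partition X into its first m rows X_l ∈ ℝ^{m×k} and its last n rows X_U ∈ ℝ^{n×k}. Let r = X_lᵀ 𝟙_m ∈ ℝ^k (the vector of column sums of X_l) and define X̃_U = X_U + (1/n) 𝟙_n rᵀ, where 𝟙_n ∈ ℝⁿ is the all-ones vector. Then 𝟙_nᵀ X̃_U = 0 and X̃_Uᵀ X̃_U = p I_k − X_lᵀ X_l − (1/n) r rᵀ. -/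
/-!
The column sums of `X` vanish, so those of `X_U` are `-r` and `X̃_U` is `X_U` with its column
means subtracted. Centering `Y ↦ Y - (1/n) 𝟙 sᵀ`, where `s = Yᵀ 𝟙`, kills the column sums and
lowers the Gram matrix by `(1/n) s sᵀ` (the cross terms give `-2/n s sᵀ`, the square term
`+1/n s sᵀ`). Finally `Xᵀ X = X_lᵀ X_l + X_Uᵀ X_U` gives `X_Uᵀ X_U = p I - X_lᵀ X_l`.
-/

open Matrix

namespace Matrix

variable {ι K : Type*}

theorem transpose_mul_self_eq_castAdd_add_natAdd [NonUnitalNonAssocSemiring K] {m n : ℕ}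
    (X : Matrix (Fin (m + n)) ι K) :
    Xᵀ * X = (X.submatrix (Fin.castAdd n) id)ᵀ * X.submatrix (Fin.castAdd n) id +
      (X.submatrix (Fin.natAdd m) id)ᵀ * X.submatrix (Fin.natAdd m) id := by
  ext a b
  simp [mul_apply, Fin.sum_univ_add]

variable {α : Type*} [Fintype α]

theorem one_vecMul_apply [NonAssocSemiring K] (A : Matrix α ι K) (j : ι) :
    (1 ᵥ* A) j = ∑ i, A i j := by
  simp [vecMul, dotProduct]

variable [Field K] (Y : Matrix α ι K)

def centerCols : Matrix α ι K :=
  Y - (Fintype.card α : K)⁻¹ • vecMulVec (1 : α → K) (1 ᵥ* Y)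

theorem one_vecMul_centerCols (hα : (Fintype.card α : K) ≠ 0) : 1 ᵥ* centerCols Y = 0 := by
  rw [centerCols, vecMul_sub, vecMul_smul, vecMul_vecMulVec, one_dotProduct_one, smul_smul,
    inv_mul_cancel₀ hα, one_smul, sub_self]

theorem centerCols_transpose_mul_self [Fintype ι] (hα : (Fintype.card α : K) ≠ 0) :
    (centerCols Y)ᵀ * centerCols Y =
      Yᵀ * Y - (Fintype.card α : K)⁻¹ • vecMulVec (1 ᵥ* Y) (1 ᵥ* Y) := by
  have hcross : Yᵀ * vecMulVec (1 : α → K) (1 ᵥ* Y) = vecMulVec (1 ᵥ* Y) (1 ᵥ* Y) := by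
    rw [mul_vecMulVec, mulVec_transpose]
  have hcross' : (vecMulVec (1 : α → K) (1 ᵥ* Y))ᵀ * Y = vecMulVec (1 ᵥ* Y) (1 ᵥ* Y) := by
    rw [transpose_vecMulVec, vecMulVec_mul]
  have hsq : (vecMulVec (1 : α → K) (1 ᵥ* Y))ᵀ * vecMulVec (1 : α → K) (1 ᵥ* Y) =
      (Fintype.card α : K) • vecMulVec (1 ᵥ* Y) (1 ᵥ* Y) := by
    rw [transpose_vecMulVec, vecMulVec_mul_vecMulVec, one_dotProduct_one, vecMulVec_smul]
  have hc : (Fintype.card α : K)⁻¹ * (Fintype.card α : K) = 1 := inv_mul_cancel₀ hα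
  rw [centerCols, transpose_sub, transpose_smul, Matrix.sub_mul, Matrix.mul_sub, Matrix.mul_sub,
    Matrix.smul_mul, Matrix.mul_smul, Matrix.smul_mul, Matrix.mul_smul, hcross, hcross', hsq]
  linear_combination (norm := module) hc • (Fintype.card α : K)⁻¹ • vecMulVec (1 ᵥ* Y) (1 ᵥ* Y)

end Matrix

/-- (Centering transformation for the partitioned supervised Laplacian eigenmap
constraints.) If `X ∈ ℝ^{(m+n)×k}` satisfies `𝟙ᵀ X = 0` and `Xᵀ X = p I_k`, with top
block `X_l` (first `m` rows) and bottom block `X_U` (last `n` rows),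
`r = X_lᵀ 𝟙_m`, and `X̃_U = X_U + (1/n) 𝟙_n rᵀ`, then `𝟙_nᵀ X̃_U = 0` and
`X̃_Uᵀ X̃_U = p I_k − X_lᵀ X_l − (1/n) r rᵀ`. -/
theorem stmt_15 {m n k : ℕ} (hn : 0 < n) (p : ℝ)
    (X : Matrix (Fin (m + n)) (Fin k) ℝ)
    (hsum : ∀ j, ∑ i, X i j = 0)
    (hXX : Xᵀ * X = p • (1 : Matrix (Fin k) (Fin k) ℝ))
    (Xl : Matrix (Fin m) (Fin k) ℝ) (hXl : Xl = X.submatrix (Fin.castAdd n) id)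
    (XU : Matrix (Fin n) (Fin k) ℝ) (hXU : XU = X.submatrix (Fin.natAdd m) id)
    (r : Fin k → ℝ) (hr : ∀ j, r j = ∑ i, Xl i j)
    (Xt : Matrix (Fin n) (Fin k) ℝ)
    (hXt : Xt = XU + (n : ℝ)⁻¹ • Matrix.vecMulVec (fun _ => (1 : ℝ)) r) :
    (∀ j, ∑ i, Xt i j = 0) ∧
    Xtᵀ * Xt = p • (1 : Matrix (Fin k) (Fin k) ℝ) - Xlᵀ * Xl -
      (n : ℝ)⁻¹ • Matrix.vecMulVec r r := by
  have hcard : (Fintype.card (Fin n) : ℝ) ≠ 0 := by simpa using hn.ne'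
  have hXU_sum : 1 ᵥ* XU = -r := by
    funext j
    rw [one_vecMul_apply, Pi.neg_apply, hr, eq_neg_iff_add_eq_zero, add_comm, ← hsum j,
      Fin.sum_univ_add, hXl, hXU]
    rfl
  have hXt : Xt = centerCols XU := by
    rw [hXt, centerCols, hXU_sum, vecMulVec_neg, smul_neg, sub_neg_eq_add, Fintype.card_fin]
    rfl
  have hgram : XUᵀ * XU = p • (1 : Matrix (Fin k) (Fin k) ℝ) - Xlᵀ * Xl := by
    rw [← hXX, transpose_mul_self_eq_castAdd_add_natAdd, ← hXl, ← hXU, add_sub_cancel_left]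
  refine ⟨fun j => ?_, ?_⟩
  · rw [← one_vecMul_apply, hXt, one_vecMul_centerCols XU hcard, Pi.zero_apply]
  · rw [hXt, centerCols_transpose_mul_self XU hcard, hgram, hXU_sum, neg_vecMulVec,
      vecMulVec_neg, neg_neg, Fintype.card_fin]
end
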